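/- Let G be a simple graph on n ≥ 2 vertices with adjacency matrix A, largest eigenvalue λ₁ > 0, λ(A) := max(λ₂(A), |λ_n(A)|), and ρ := λ(A)/λ₁ with 0 < ρ < 1. Suppose there is a unit-norm eigenvector v₁ of A for λ₁ with ‖v₁ − u‖_∞ ≤ ε₀/√n for some ε₀ ∈ [0,1), where u := n^{−1/2}(1,…,1). Then for every δ ∈ (0,1), every vertex i, and every positive integer d with d ≥ (1/2)·ln(n/(δ(1−ε₀)⁴))/ln(1/ρ), the number of vertices j whose graph distance from i exceeds d (including vertices in other connected components) is at most δn. -/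
import Mathlib

set_option maxHeartbeats 1000000


/-- Let `G` be a simple graph on `n ≥ 2` vertices with adjacency matrix `A`,
largest eigenvalue `λ₁ > 0`, `λ(A) := max(λ₂(A), |λ_n(A)|)`, and `ρ := λ(A)/λ₁` with
`0 < ρ < 1`.  Suppose there is a unit-norm eigenvector `v₁` of `A` for `λ₁` with
`‖v₁ − u‖_∞ ≤ ε₀/√n` for some `ε₀ ∈ [0,1)`, where `u := n^{−1/2}(1,…,1)`.  Then for every
`δ ∈ (0,1)`, every vertex `i`, and every positive integer `d` with
`d ≥ (1/2)·ln(n/(δ(1−ε₀)⁴))/ln(1/ρ)`, the number of vertices `j` whose graph distance from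
`i` exceeds `d` (infinite distance, i.e. other components, included) is at most `δn`. -/
theorem stmt14 (n : ℕ) (hn : 2 ≤ n) (G : SimpleGraph (Fin n)) [DecidableRel G.Adj]
    (A : Matrix (Fin n) (Fin n) ℝ) (hAdef : A = G.adjMatrix ℝ) (hA : A.IsHermitian)
    (ev : Fin n → ℝ) (σ : Equiv.Perm (Fin n))
    (hev : ev = hA.eigenvalues ∘ σ) (hsort : Antitone ev)
    (hpos : 0 < ev ⟨0, by omega⟩)
    (ρ : ℝ) (hρdef : ρ = max (ev ⟨1, by omega⟩) |ev ⟨n - 1, by omega⟩| / ev ⟨0, by omega⟩)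
    (hρ0 : 0 < ρ) (hρ1 : ρ < 1)
    (v₁ : Fin n → ℝ) (hv : A.mulVec v₁ = ev ⟨0, by omega⟩ • v₁) (hunit : ∑ i, v₁ i ^ 2 = 1)
    (ε₀ : ℝ) (hε₀0 : 0 ≤ ε₀) (hε₀1 : ε₀ < 1)
    (hinf : ∀ i, |v₁ i - (Real.sqrt n)⁻¹| ≤ ε₀ / Real.sqrt n) :
    ∀ δ : ℝ, 0 < δ → δ < 1 → ∀ i : Fin n, ∀ d : ℕ, 1 ≤ d →
      (1 / 2) * Real.log ((n : ℝ) / (δ * (1 - ε₀) ^ 4)) / Real.log (1 / ρ) ≤ (d : ℝ) →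
      (({j : Fin n | (d : ℕ∞) < G.edist i j}.ncard : ℝ)) ≤ δ * n := by
  classical
  intro δ hδ0 hδ1 i d hd1 hd
  have hn0 : (0:ℝ) < n := by positivity
  set i0 : Fin n := ⟨0, by omega⟩ with hi0
  set i1 : Fin n := ⟨1, by omega⟩ with hi1
  set iN : Fin n := ⟨n - 1, by omega⟩ with hiN
  set lam1 : ℝ := ev i0 with hlam1
  set lam : ℝ := max (ev i1) |ev iN| with hlam
  have hlamnn : 0 ≤ lam := le_trans (abs_nonneg _) (le_max_right _ _)
  have hlamval : lam = ρ * lam1 := by rw [hρdef]; field_simp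
  have hlamlt : lam < lam1 := by rw [hlamval]; nlinarith
  set μ := hA.eigenvalues with hμdef
  set U : Matrix (Fin n) (Fin n) ℝ := (hA.eigenvectorUnitary : Matrix (Fin n) (Fin n) ℝ)
    with hU
  set k₀ : Fin n := σ i0 with hk₀
  have hμk₀ : μ k₀ = lam1 := by rw [hlam1, hev]; rfl
  have hμle : ∀ k, k ≠ k₀ → |μ k| ≤ lam := by
    intro k hk
    have h1 : μ k = ev (σ.symm k) := by rw [hev]; simp
    have h2 : σ.symm k ≠ i0 := by
      intro h; exact hk (by rw [hk₀, ← h]; simp)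
    have h3 : 1 ≤ (σ.symm k).1 := by
      rcases Nat.eq_zero_or_pos (σ.symm k).1 with h | h
      · exact absurd (Fin.ext (h.trans rfl) : σ.symm k = i0) h2
      · exact h
    have h4 : ev (σ.symm k) ≤ ev i1 := hsort (by rw [hi1, Fin.le_def]; exact h3)
    have h5 : ev iN ≤ ev (σ.symm k) := hsort (by
      rw [hiN, Fin.le_def]
      have := (σ.symm k).2; simp; omega)
    rw [h1, abs_le]
    constructor
    · have : -|ev iN| ≤ ev iN := neg_abs_le _
      have := le_trans this h5
      linarith [le_max_right (ev i1) |ev iN|]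
    · exact le_trans h4 (le_max_left _ _)
  have hμlt : ∀ k, k ≠ k₀ → μ k ≠ lam1 := by
    intro k hk heq
    have := hμle k hk
    rw [heq] at this
    have : lam1 ≤ lam := le_trans (le_abs_self _) this
    linarith
  have hUU : U * star U = 1 := Matrix.mem_unitaryGroup_iff.mp hA.eigenvectorUnitary.2
  have hUU' : star U * U = 1 := Matrix.mem_unitaryGroup_iff'.mp hA.eigenvectorUnitary.2
  have hRow : ∀ a b : Fin n, ∑ k, U a k * U b k = if a = b then 1 else 0 := by
    intro a b
    have := congrArg (fun M => M a b) hUU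
    simpa [Matrix.mul_apply, Matrix.one_apply, Matrix.conjTranspose_apply] using this
  have hCol : ∀ k k' : Fin n, ∑ j, U j k * U j k' = if k = k' then 1 else 0 := by
    intro k k'
    have := congrArg (fun M => M k k') hUU'
    simpa [Matrix.mul_apply, Matrix.one_apply, Matrix.conjTranspose_apply, mul_comm] using this
  have hspec : A = U * Matrix.diagonal μ * star U := by
    have := hA.spectral_theorem
    simpa [RCLike.ofReal_real_eq_id] using this
  have hAd : ∀ m : ℕ, A ^ m = U * Matrix.diagonal (fun k => μ k ^ m) * star U := by
    intro m
    induction m with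
    | zero =>
      simp only [pow_zero]
      have h0 : Matrix.diagonal (fun _ : Fin n => (1:ℝ)) = 1 := Matrix.diagonal_one
      rw [h0, Matrix.mul_one, hUU]
    | succ m ih =>
      rw [pow_succ, ih, hspec]
      calc U * Matrix.diagonal (fun k => μ k ^ m) * star U * (U * Matrix.diagonal μ * star U)
          = U * Matrix.diagonal (fun k => μ k ^ m) * (star U * U) * Matrix.diagonal μ * star U := by
            noncomm_ring
        _ = U * (Matrix.diagonal (fun k => μ k ^ m) * Matrix.diagonal μ) * star U := by
            rw [hUU']; noncomm_ring
        _ = U * Matrix.diagonal (fun k => μ k ^ (m + 1)) * star U := by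
            rw [Matrix.diagonal_mul_diagonal]
            have hfun : (fun k => μ k ^ m * μ k) = fun k => μ k ^ (m + 1) := by
              funext k; rw [pow_succ]
            rw [hfun]
  have hAdentry : ∀ (a b : Fin n), (A ^ d) a b = ∑ k, μ k ^ d * (U a k * U b k) := by
    intro a b
    rw [hAd d, Matrix.mul_apply]
    simp only [Matrix.mul_diagonal, Matrix.star_apply, star_trivial]
    exact Finset.sum_congr rfl (fun k _ => by ring)
  -- v₁ is (up to sign) column k₀ of U
  set y : Fin n → ℝ := (star U).mulVec v₁ with hy
  have hyk : ∀ k, k ≠ k₀ → y k = 0 := by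
    intro k hk
    have h1 : (Matrix.diagonal μ).mulVec y = lam1 • y := by
      have : (star U).mulVec (A.mulVec v₁) = (star U).mulVec (lam1 • v₁) := by rw [hv]
      rw [Matrix.mulVec_smul] at this
      rw [hy, ← this, hspec]
      rw [Matrix.mulVec_mulVec, Matrix.mulVec_mulVec]
      have hm : star U * (U * Matrix.diagonal μ * star U) = Matrix.diagonal μ * star U := by
        calc star U * (U * Matrix.diagonal μ * star U)
            = (star U * U) * (Matrix.diagonal μ * star U) := by noncomm_ring
          _ = Matrix.diagonal μ * star U := by rw [hUU', Matrix.one_mul]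
      rw [hm]
    have h2 := congrFun h1 k
    simp only [Matrix.mulVec_diagonal, Pi.smul_apply, smul_eq_mul] at h2
    by_contra hne
    exact hμlt k hk (mul_right_cancel₀ hne h2)
  have hv₁ : ∀ j, v₁ j = y k₀ * U j k₀ := by
    intro j
    have h1 : U.mulVec y = v₁ := by
      rw [hy, Matrix.mulVec_mulVec, hUU, Matrix.one_mulVec]
    have h2 := congrFun h1 j
    rw [← h2]
    show ∑ k, U j k * y k = y k₀ * U j k₀
    rw [Finset.sum_eq_single k₀]
    · ring
    · intro k _ hk; rw [hyk k hk]; ring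
    · simp
  have hc2 : y k₀ ^ 2 = 1 := by
    have h1 : ∑ j, v₁ j ^ 2 = y k₀ ^ 2 * ∑ j, U j k₀ * U j k₀ := by
      rw [Finset.mul_sum]
      congr 1
      funext j
      rw [hv₁ j]; ring
    rw [hunit, hCol k₀ k₀] at h1
    simpa using h1.symm
  have hUv : ∀ a b : Fin n, U a k₀ * U b k₀ = v₁ a * v₁ b := by
    intro a b
    rw [hv₁ a, hv₁ b]
    linear_combination (-(U a k₀ * U b k₀)) * hc2
  -- lower bound on entries of v₁
  have hsq : (0:ℝ) < Real.sqrt n := Real.sqrt_pos.mpr hn0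
  have hvlb : ∀ m, (1 - ε₀) / Real.sqrt n ≤ v₁ m := by
    intro m
    have := hinf m
    rw [abs_le] at this
    have h1 := this.1
    have : (Real.sqrt n)⁻¹ - ε₀ / Real.sqrt n ≤ v₁ m := by linarith
    calc (1 - ε₀) / Real.sqrt n = (Real.sqrt n)⁻¹ - ε₀ / Real.sqrt n := by
          rw [sub_div, one_div]
      _ ≤ v₁ m := this
  have hvnn : ∀ m, 0 ≤ v₁ m :=
    fun m => le_trans (div_nonneg (by linarith) hsq.le) (hvlb m)
  -- the bad set
  set T : Finset (Fin n) := Finset.univ.filter (fun j => (d : ℕ∞) < G.edist i j) with hT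
  have hset : {j : Fin n | (d : ℕ∞) < G.edist i j}.ncard = T.card := by
    rw [← Set.ncard_coe_finset]
    congr 1
    ext j
    simp [hT]
  have hzero : ∀ j ∈ T, (A ^ d) i j = 0 := by
    intro j hj
    rw [hT, Finset.mem_filter] at hj
    rw [hAdef, SimpleGraph.adjMatrix_pow_apply_eq_card_walk]
    norm_cast
    rw [Fintype.card_eq_zero_iff]
    constructor
    rintro ⟨p, hp⟩
    exact absurd (hp ▸ G.edist_le p) (not_le.mpr hj.2)
  set s : Finset (Fin n) := Finset.univ.erase k₀ with hs
  set R : Fin n → ℝ := fun j => ∑ k ∈ s, μ k ^ d * (U i k * U j k) with hR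
  have hRj : ∀ j ∈ T, lam1 ^ d * (v₁ i * v₁ j) = - R j := by
    intro j hj
    have h1 := hAdentry i j
    rw [hzero j hj] at h1
    have h2 : (0:ℝ) = μ k₀ ^ d * (U i k₀ * U j k₀) + R j := by
      rw [h1, hR, hs]
      rw [← Finset.add_sum_erase _ _ (Finset.mem_univ k₀)]
    rw [hμk₀, hUv] at h2
    linarith
  -- sum of squares bound
  have hRsum : ∑ j, R j ^ 2 ≤ lam ^ (2 * d) := by
    have h1 : ∑ j, R j ^ 2 = ∑ k ∈ s, (μ k ^ d * U i k) ^ 2 := by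
      have expand : ∀ j, R j ^ 2
          = ∑ k ∈ s, ∑ k' ∈ s, (μ k ^ d * U i k) * (μ k' ^ d * U i k') * (U j k * U j k') := by
        intro j
        rw [hR, sq, Finset.sum_mul_sum]
        congr 1; funext k; congr 1; funext k'; ring
      calc ∑ j, R j ^ 2
          = ∑ j, ∑ k ∈ s, ∑ k' ∈ s, (μ k ^ d * U i k) * (μ k' ^ d * U i k') * (U j k * U j k') := by
            exact Finset.sum_congr rfl (fun j _ => expand j)
        _ = ∑ k ∈ s, ∑ k' ∈ s, (μ k ^ d * U i k) * (μ k' ^ d * U i k') * ∑ j, (U j k * U j k') := by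
            rw [Finset.sum_comm]
            congr 1; funext k
            rw [Finset.sum_comm]
            congr 1; funext k'
            rw [Finset.mul_sum]
        _ = ∑ k ∈ s, (μ k ^ d * U i k) ^ 2 := by
            apply Finset.sum_congr rfl
            intro k hk
            rw [Finset.sum_eq_single k]
            · rw [hCol k k, if_pos rfl]; ring
            · intro k' _ hk'; rw [hCol k k', if_neg (Ne.symm hk'), mul_zero]
            · intro h; exact absurd hk h
    rw [h1]
    have h2 : ∀ k ∈ s, (μ k ^ d * U i k) ^ 2 ≤ lam ^ (2 * d) * (U i k) ^ 2 := by
      intro k hk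
      have hμk := hμle k (Finset.ne_of_mem_erase hk)
      have : (μ k ^ d) ^ 2 ≤ lam ^ (2 * d) := by
        have h3 : (μ k ^ d) ^ 2 = |μ k| ^ (2 * d) := by
          rw [show 2 * d = d * 2 by ring, pow_mul, ← abs_pow, sq_abs]
        rw [h3]
        exact pow_le_pow_left₀ (abs_nonneg _) hμk _
      nlinarith [sq_nonneg (U i k), sq_nonneg (μ k ^ d)]
    calc ∑ k ∈ s, (μ k ^ d * U i k) ^ 2 ≤ ∑ k ∈ s, lam ^ (2 * d) * (U i k) ^ 2 :=
          Finset.sum_le_sum h2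
      _ ≤ ∑ k, lam ^ (2 * d) * (U i k) ^ 2 := by
          apply Finset.sum_le_sum_of_subset_of_nonneg (Finset.erase_subset _ _)
          intro k _ _; positivity
      _ = lam ^ (2 * d) := by
          rw [← Finset.mul_sum]
          have : ∑ k, (U i k) ^ 2 = 1 := by
            have := hRow i i
            simp at this
            rw [← this]
            congr 1; funext k; ring
          rw [this, mul_one]
  -- key cardinality bound
  have he : (0:ℝ) < 1 - ε₀ := by linarith
  have hL : (0:ℝ) < lam1 ^ d * ((1 - ε₀) ^ 2 / n) :=
    mul_pos (pow_pos hpos d) (div_pos (pow_pos he 2) hn0)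
  have hkey : (T.card : ℝ) * (lam1 ^ d * ((1 - ε₀) ^ 2 / n)) ^ 2 ≤ lam ^ (2 * d) := by
    have h1 : (T.card : ℝ) * (lam1 ^ d * ((1 - ε₀) ^ 2 / n)) ^ 2 ≤ ∑ j ∈ T, R j ^ 2 := by
      rw [Finset.card_eq_sum_ones T]
      push_cast
      rw [Finset.sum_mul]
      apply Finset.sum_le_sum
      intro j hj
      rw [one_mul]
      have h2 := hRj j hj
      have h3 : R j ^ 2 = (lam1 ^ d * (v₁ i * v₁ j)) ^ 2 := by rw [h2]; ring
      rw [h3]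
      have h4 : (1 - ε₀) ^ 2 / n ≤ v₁ i * v₁ j := by
        have := hvlb i; have := hvlb j
        have h5 : ((1 - ε₀) / Real.sqrt n) * ((1 - ε₀) / Real.sqrt n) ≤ v₁ i * v₁ j := by
          exact mul_le_mul (hvlb i) (hvlb j) (div_nonneg he.le hsq.le) (hvnn i)
        calc (1 - ε₀) ^ 2 / n = ((1 - ε₀) / Real.sqrt n) * ((1 - ε₀) / Real.sqrt n) := by
              rw [div_mul_div_comm, ← sq, ← sq, Real.sq_sqrt hn0.le]
          _ ≤ _ := h5
      have h6 : (0:ℝ) ≤ (1 - ε₀) ^ 2 / n := by positivity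
      have hl1d : (0:ℝ) < lam1 ^ d := pow_pos hpos d
      apply sq_le_sq'
      · nlinarith
      · nlinarith
    calc (T.card : ℝ) * (lam1 ^ d * ((1 - ε₀) ^ 2 / n)) ^ 2 ≤ ∑ j ∈ T, R j ^ 2 := h1
      _ ≤ ∑ j, R j ^ 2 := by
          apply Finset.sum_le_sum_of_subset_of_nonneg (Finset.subset_univ T)
          intro j _ _; positivity
      _ ≤ lam ^ (2 * d) := hRsum
  -- translate to ρ
  have hcard : (T.card : ℝ) ≤ ρ ^ (2 * d) * n ^ 2 / (1 - ε₀) ^ 4 := by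
    have hl1d : (0:ℝ) < lam1 ^ d := pow_pos hpos d
    have h1 : lam ^ (2 * d) = ρ ^ (2 * d) * lam1 ^ (2 * d) := by
      rw [hlamval, mul_pow]
    have h2 : (lam1 ^ d * ((1 - ε₀) ^ 2 / n)) ^ 2
        = lam1 ^ (2 * d) * ((1 - ε₀) ^ 4 / n ^ 2) := by
      rw [show 2 * d = d * 2 by ring, pow_mul]
      field_simp
    rw [h1] at hkey
    rw [h2] at hkey
    rw [div_eq_mul_inv, ← sub_nonneg]
    have hl12d : (0:ℝ) < lam1 ^ (2 * d) := pow_pos hpos _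
    rw [← sub_nonneg] at hkey ⊢
    have h3 : ρ ^ (2 * d) * n ^ 2 * ((1 - ε₀) ^ 4)⁻¹ - T.card
        = (ρ ^ (2 * d) * lam1 ^ (2 * d) - T.card * (lam1 ^ (2 * d) * ((1 - ε₀) ^ 4 / n ^ 2)))
          * (n ^ 2 / ((1 - ε₀) ^ 4 * lam1 ^ (2 * d))) := by
      field_simp
    rw [h3]
    simpa using mul_nonneg hkey
      (le_of_lt (div_pos (pow_pos hn0 2) (mul_pos (pow_pos he 4) hl12d)))
  have hρd : ρ ^ (2 * d) ≤ δ * (1 - ε₀) ^ 4 / n := by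
    have hx : (0:ℝ) < (n : ℝ) / (δ * (1 - ε₀) ^ 4) :=
      div_pos hn0 (mul_pos hδ0 (pow_pos he 4))
    have hlρ : 0 < Real.log (1 / ρ) :=
      Real.log_pos (by rw [one_div]; exact (one_lt_inv₀ hρ0).mpr hρ1)
    have h1 : Real.log ((n : ℝ) / (δ * (1 - ε₀) ^ 4)) ≤ 2 * d * Real.log (1 / ρ) := by
      have := hd
      rw [div_le_iff₀ hlρ] at this
      linarith
    have h2 : Real.log (ρ ^ (2 * d)) ≤ Real.log (δ * (1 - ε₀) ^ 4 / n) := by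
      rw [Real.log_pow]
      have h3 : Real.log (δ * (1 - ε₀) ^ 4 / n) = - Real.log ((n : ℝ) / (δ * (1 - ε₀) ^ 4)) := by
        rw [show δ * (1 - ε₀) ^ 4 / n = ((n : ℝ) / (δ * (1 - ε₀) ^ 4))⁻¹ by
          rw [inv_div], Real.log_inv]
      have h4 : Real.log (1 / ρ) = - Real.log ρ := by rw [one_div, Real.log_inv]
      rw [h3]
      push_cast
      rw [h4] at h1
      nlinarith
    have h5 : (0:ℝ) < ρ ^ (2 * d) := pow_pos hρ0 _
    have h6 : (0:ℝ) < δ * (1 - ε₀) ^ 4 / n :=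
      div_pos (mul_pos hδ0 (pow_pos he 4)) hn0
    exact (Real.log_le_log_iff h5 h6).mp h2
  -- finish
  rw [hset]
  calc (T.card : ℝ) ≤ ρ ^ (2 * d) * n ^ 2 / (1 - ε₀) ^ 4 := hcard
    _ ≤ (δ * (1 - ε₀) ^ 4 / n) * n ^ 2 / (1 - ε₀) ^ 4 :=
        (div_le_div_iff_of_pos_right (pow_pos he 4)).mpr
          (mul_le_mul_of_nonneg_right hρd (by positivity))
    _ = δ * n := by field_simp
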